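/- Under the assumptions Q(Y|A) = Q(Y), Q(S|X,A,Y) = Q(S|A), and the uniform prior Q(Y=i) = 1/3 for i = 0,1,2, the biased conditional distribution P = Q(· | S=Y) satisfies P(Y=i | A=a) = Q(S=i | A=a) for every i ∈ {0,1,2} and every artifact value a with positive probability of selection. -/

import Mathlib

open Finset
open scoped Classical BigOperators

/-- The probability of an event `p` under a (finitely supported) mass function `Q`. -/
noncomputable def pr {Ω : Type*} [Fintype Ω] (Q : Ω → ℝ) (p : Ω → Prop) : ℝ :=
  ∑ ω, if p ω then Q ω else 0

/-- Conditional probability `Q(p | q)`. -/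
noncomputable def cpr {Ω : Type*} [Fintype Ω] (Q : Ω → ℝ) (p q : Ω → Prop) : ℝ :=
  pr Q (fun ω => p ω ∧ q ω) / pr Q q

section helpers
variable {Ω : Type*} [Fintype Ω] (Q : Ω → ℝ)

lemma pr_nonneg (hQ0 : ∀ ω, 0 ≤ Q ω) (p : Ω → Prop) : 0 ≤ pr Q p := by
  apply Finset.sum_nonneg
  intro ω _
  split <;> simp [hQ0 ω]

lemma pr_congr {p q : Ω → Prop} (h : ∀ ω, p ω ↔ q ω) : pr Q p = pr Q q := by
  unfold pr
  refine Finset.sum_congr rfl fun ω _ => ?_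
  simp [h ω]

lemma pr_mono (hQ0 : ∀ ω, 0 ≤ Q ω) {p q : Ω → Prop} (h : ∀ ω, p ω → q ω) :
    pr Q p ≤ pr Q q := by
  apply Finset.sum_le_sum
  intro ω _
  by_cases hp : p ω
  · simp [hp, h ω hp]
  · simp only [hp, if_false]
    split <;> simp [hQ0 ω]

lemma pr_fiber' {V : Type*} (g : Ω → V) (p : Ω → Prop) (s : Finset V)
    (hs : ∀ ω, g ω ∈ s) :
    pr Q p = ∑ v ∈ s, pr Q (fun ω => p ω ∧ g ω = v) := by
  unfold pr
  rw [Finset.sum_comm]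
  refine Finset.sum_congr rfl fun ω _ => ?_
  by_cases hp : p ω
  · simp only [hp, true_and, if_true]
    rw [Finset.sum_ite_eq s (g ω) (fun _ => Q ω)]
    simp [hs ω]
  · simp [hp]

end helpers

theorem stmt1 {Ω XT AT : Type*} [Fintype Ω]
    (Q : Ω → ℝ) (hQ0 : ∀ ω, 0 ≤ Q ω) (hQ1 : ∑ ω, Q ω = 1)
    (X : Ω → XT) (A : Ω → AT) (Y S : Ω → Fin 3)
    -- labels independent of artifacts: Q(Y|A) = Q(Y)
    (hYA : ∀ (a : AT) (y : Fin 3), 0 < pr Q (fun ω => A ω = a) →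
      cpr Q (fun ω => Y ω = y) (fun ω => A ω = a) = pr Q (fun ω => Y ω = y))
    -- selection depends only on artifacts: Q(S|X,A,Y) = Q(S|A)
    (hS : ∀ (x : XT) (a : AT) (y s : Fin 3),
      0 < pr Q (fun ω => X ω = x ∧ A ω = a ∧ Y ω = y) →
      cpr Q (fun ω => S ω = s) (fun ω => X ω = x ∧ A ω = a ∧ Y ω = y)
        = cpr Q (fun ω => S ω = s) (fun ω => A ω = a))
    -- uniform prior
    (hunif : ∀ i : Fin 3, pr Q (fun ω => Y ω = i) = 1 / 3) :
    ∀ (i : Fin 3) (a : AT), 0 < pr Q (fun ω => S ω = Y ω ∧ A ω = a) →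
      -- P(Y=i | A=a) = Q(S=i | A=a) for P = Q(· | S = Y)
      pr Q (fun ω => Y ω = i ∧ A ω = a ∧ S ω = Y ω) /
          pr Q (fun ω => A ω = a ∧ S ω = Y ω)
        = cpr Q (fun ω => S ω = i) (fun ω => A ω = a) := by
  intro i a hpos
  -- Q(A=a) > 0
  have hApos : 0 < pr Q (fun ω => A ω = a) := by
    have := pr_mono Q hQ0 (p := fun ω => S ω = Y ω ∧ A ω = a)
      (q := fun ω => A ω = a) (fun ω h => h.2)
    linarith
  set c := fun s : Fin 3 => cpr Q (fun ω => S ω = s) (fun ω => A ω = a) with hc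
  -- fiberwise over X: key product formula
  have key : ∀ y s : Fin 3,
      pr Q (fun ω => Y ω = y ∧ A ω = a ∧ S ω = s)
        = c s * pr Q (fun ω => A ω = a ∧ Y ω = y) := by
    intro y s
    have fib : ∀ x : XT,
        pr Q (fun ω => (Y ω = y ∧ A ω = a ∧ S ω = s) ∧ X ω = x)
          = c s * pr Q (fun ω => (A ω = a ∧ Y ω = y) ∧ X ω = x) := by
      intro x
      have hiff1 : ∀ ω, ((Y ω = y ∧ A ω = a ∧ S ω = s) ∧ X ω = x)
          ↔ (S ω = s ∧ (X ω = x ∧ A ω = a ∧ Y ω = y)) := by tauto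
      have hiff2 : ∀ ω, ((A ω = a ∧ Y ω = y) ∧ X ω = x)
          ↔ (X ω = x ∧ A ω = a ∧ Y ω = y) := by tauto
      rw [pr_congr Q hiff1, pr_congr Q hiff2]
      rcases lt_or_eq_of_le (pr_nonneg Q hQ0 (fun ω => X ω = x ∧ A ω = a ∧ Y ω = y)) with hlt | heq
      · have h := hS x a y s hlt
        have hcs : c s = cpr Q (fun ω => S ω = s) (fun ω => A ω = a) := rfl
        rw [hcs, ← h]
        unfold cpr
        field_simp
      · have hzero : pr Q (fun ω => S ω = s ∧ (X ω = x ∧ A ω = a ∧ Y ω = y)) = 0 := by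
          have hle := pr_mono Q hQ0 (p := fun ω => S ω = s ∧ (X ω = x ∧ A ω = a ∧ Y ω = y))
            (q := fun ω => X ω = x ∧ A ω = a ∧ Y ω = y) (fun ω h => h.2)
          have hge := pr_nonneg Q hQ0 (fun ω => S ω = s ∧ (X ω = x ∧ A ω = a ∧ Y ω = y))
          linarith
        rw [hzero, ← heq, mul_zero]
    have h1 := pr_fiber' Q X (fun ω => Y ω = y ∧ A ω = a ∧ S ω = s)
      (Finset.univ.image X) (fun ω => Finset.mem_image_of_mem X (Finset.mem_univ ω))
    have h2 := pr_fiber' Q X (fun ω => A ω = a ∧ Y ω = y)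
      (Finset.univ.image X) (fun ω => Finset.mem_image_of_mem X (Finset.mem_univ ω))
    rw [h1, h2, Finset.mul_sum]
    exact Finset.sum_congr rfl fun x _ => fib x
  -- Q(A=a ∧ Y=y) = 1/3 * Q(A=a)
  have hAY : ∀ y : Fin 3,
      pr Q (fun ω => A ω = a ∧ Y ω = y) = 1 / 3 * pr Q (fun ω => A ω = a) := by
    intro y
    have h := hYA a y hApos
    rw [hunif y] at h
    unfold cpr at h
    have : pr Q (fun ω => Y ω = y ∧ A ω = a) = 1 / 3 * pr Q (fun ω => A ω = a) := by
      field_simp at h ⊢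
      linarith [h]
    rw [← this]
    exact pr_congr Q (fun ω => by tauto)
  -- numerator
  have hnum : pr Q (fun ω => Y ω = i ∧ A ω = a ∧ S ω = Y ω)
      = c i * (1 / 3 * pr Q (fun ω => A ω = a)) := by
    have : pr Q (fun ω => Y ω = i ∧ A ω = a ∧ S ω = Y ω)
        = pr Q (fun ω => Y ω = i ∧ A ω = a ∧ S ω = i) := by
      refine pr_congr Q fun ω => ?_
      constructor
      · rintro ⟨h1, h2, h3⟩; exact ⟨h1, h2, h1 ▸ h3⟩
      · rintro ⟨h1, h2, h3⟩; exact ⟨h1, h2, h1.symm ▸ h3⟩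
    rw [this, key i i, hAY i]
  -- denominator
  have hden : pr Q (fun ω => A ω = a ∧ S ω = Y ω)
      = 1 / 3 * pr Q (fun ω => A ω = a) := by
    have hdec := pr_fiber' Q Y (fun ω => A ω = a ∧ S ω = Y ω)
      Finset.univ (fun ω => Finset.mem_univ _)
    rw [hdec]
    have step : ∀ y : Fin 3,
        pr Q (fun ω => (A ω = a ∧ S ω = Y ω) ∧ Y ω = y)
          = c y * (1 / 3 * pr Q (fun ω => A ω = a)) := by
      intro y
      have : pr Q (fun ω => (A ω = a ∧ S ω = Y ω) ∧ Y ω = y)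
          = pr Q (fun ω => Y ω = y ∧ A ω = a ∧ S ω = y) := by
        refine pr_congr Q fun ω => ?_
        constructor
        · rintro ⟨⟨h1, h2⟩, h3⟩; exact ⟨h3, h1, h3 ▸ h2⟩
        · rintro ⟨h1, h2, h3⟩; exact ⟨⟨h2, h1.symm ▸ h3⟩, h1⟩
      rw [this, key y y, hAY y]
    rw [Finset.sum_congr rfl (fun y _ => step y)]
    rw [← Finset.sum_mul]
    have hsumc : ∑ y : Fin 3, c y = 1 := by
      have hdecS := pr_fiber' Q S (fun ω => A ω = a) Finset.univ (fun ω => Finset.mem_univ _)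
      have : ∀ y : Fin 3, c y = pr Q (fun ω => S ω = y ∧ A ω = a) / pr Q (fun ω => A ω = a) := by
        intro y; rfl
      simp only [this]
      rw [← Finset.sum_div]
      have : ∑ y : Fin 3, pr Q (fun ω => S ω = y ∧ A ω = a)
          = pr Q (fun ω => A ω = a) := by
        rw [hdecS]
        exact Finset.sum_congr rfl fun y _ => pr_congr Q (fun ω => by tauto)
      rw [this, div_self (ne_of_gt hApos)]
    rw [hsumc, one_mul]
  rw [hnum, hden]
  have h3 : (1 : ℝ) / 3 * pr Q (fun ω => A ω = a) ≠ 0 := by positivity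
  field_simp
  rfl
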